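/- Every fermentable lattice is dually *-distributive. -/

import Mathlib

/-- `X` refines `Y`: every element of `X` lies below some element of `Y`. -/
def Refines {α : Type*} [Preorder α] (X Y : Set α) : Prop :=
  ∀ x ∈ X, ∃ y ∈ Y, x ≤ y

/-- `X` is a nontrivial join-cover of `a`. -/
def IsNontrivialJoinCover {α : Type*} [SemilatticeSup α] (a : α) (X : Finset α) : Prop :=
  ∃ h : X.Nonempty, a ≤ X.sup' h id ∧ ∀ x ∈ X, ¬ a ≤ x

/-- `E` is a minimal nontrivial join-cover of `a`. -/
def IsMinimalNontrivialJoinCover {α : Type*} [SemilatticeSup α] (a : α) (E : Finset α) : Prop :=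
  IsNontrivialJoinCover a E ∧
    ∀ X : Finset α, IsNontrivialJoinCover a X → Refines (X : Set α) (E : Set α) → E ⊆ X

/-- `M_Σ(a)`: the minimal nontrivial join-covers of `a` contained in `Sg`. -/
def MinCoversIn {α : Type*} [SemilatticeSup α] (Sg : Set α) (a : α) : Set (Finset α) :=
  {E | IsMinimalNontrivialJoinCover a E ∧ (E : Set α) ⊆ Sg}

/-- The `Sg`-minimal join-cover refinement property. -/
def HasSigmaMCRP {α : Type*} [SemilatticeSup α] (Sg : Set α) : Prop :=
  (∀ p ∈ Sg, ∀ X : Finset α, IsNontrivialJoinCover p X →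
    ∃ E ∈ MinCoversIn Sg p, Refines (E : Set α) (X : Set α)) ∧
  ∀ p ∈ Sg, (MinCoversIn Sg p).Finite

/-- The join-dependency relation. -/
def JoinDep {α : Type*} [SemilatticeSup α] (a b : α) : Prop :=
  a ≠ b ∧ ∃ c : α, a ≤ b ⊔ c ∧ ∀ x < b, ¬ a ≤ x ⊔ c

/-- A leaven of a join-semilattice: a set of join-irreducible elements that join-generates,
satisfies the `Sg`-MCRP, and carries no infinite `D`-sequence. -/
def IsLeaven {α : Type*} [SemilatticeSup α] (Sg : Set α) : Prop :=
  (∀ p ∈ Sg, SupIrred p) ∧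
  (∀ x : α, ∃ S ⊆ Sg, IsLUB S x) ∧
  HasSigmaMCRP Sg ∧
  ¬ ∃ f : ℕ → α, (∀ n, f n ∈ Sg) ∧ ∀ n, JoinDep (f n) (f (n + 1))

/-- A join-semilattice is fermentable if it has a leaven. -/
def Fermentable (α : Type*) [SemilatticeSup α] : Prop :=
  ∃ Sg : Set α, IsLeaven Sg
/-- `dstar a s` is the element `a*s` defined (for nonempty `s`, with the sequence written in
reverse, head = last entry) by `a*⟨b⟩ = a ⊔ b` and `a*(s⌢⟨b⟩) = a ⊔ (b ⊓ a*s)`. -/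
def dstar {α : Type*} [Lattice α] (a : α) : List α → α
  | [] => a
  | [b] => a ⊔ b
  | b :: s => a ⊔ (b ⊓ dstar a s)

/-- `a*B`: the set of all `a*s` for `s` a nonempty finite sequence of elements of `B`. -/
def dstarSet {α : Type*} [Lattice α] (a : α) (B : Set α) : Set α :=
  {x | ∃ s : List α, s ≠ [] ∧ (∀ b ∈ s, b ∈ B) ∧ x = dstar a s}

/-- A lattice is dually `*`-distributive if for every `a` and every nonempty `B` whose
greatest lower bound `m` exists, `a ⊔ m` is the greatest lower bound of `a*B`. -/
def DuallyStarDistributive (α : Type*) [Lattice α] : Prop :=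
  ∀ (a : α) (B : Set α) (m : α), B.Nonempty → IsGLB B m → IsGLB (dstarSet a B) (a ⊔ m)

/-! ### Auxiliary lemmas -/

section DstarLemmas
variable {L : Type*} [Lattice L] (a : L)

lemma dstar_cons (b : L) {s : List L} (hs : s ≠ []) :
    dstar a (b :: s) = a ⊔ (b ⊓ dstar a s) := by
  cases s with
  | nil => exact absurd rfl hs
  | cons c t => rfl

lemma le_dstar (s : List L) : a ≤ dstar a s := by
  cases s with
  | nil => exact le_rfl
  | cons b t =>
    cases t with
    | nil => exact le_sup_left
    | cons c u => rw [dstar_cons a b (by simp)]; exact le_sup_left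

lemma dstar_append_le_left {s : List L} (t : List L) (hs : s ≠ []) :
    dstar a (s ++ t) ≤ dstar a s := by
  induction s with
  | nil => exact absurd rfl hs
  | cons b s' ih =>
    cases s' with
    | nil =>
      cases t with
      | nil => simp
      | cons c u =>
        rw [show (([b] : List L) ++ c :: u) = b :: (c :: u) from rfl,
          dstar_cons a b (by simp)]
        show a ⊔ (b ⊓ dstar a (c :: u)) ≤ a ⊔ b
        exact sup_le le_sup_left (inf_le_left.trans le_sup_right)
    | cons c s'' =>
      have h1 : (c :: s'') ++ t ≠ [] := by simp
      rw [show ((b :: c :: s'') ++ t) = b :: ((c :: s'') ++ t) from rfl,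
        dstar_cons a b h1, dstar_cons a b (by simp)]
      exact sup_le le_sup_left
        (le_sup_right.trans' (inf_le_inf_left b (ih (by simp))))

lemma dstar_append_le_right (s : List L) {t : List L} (ht : t ≠ []) :
    dstar a (s ++ t) ≤ dstar a t := by
  induction s with
  | nil => simp
  | cons b s' ih =>
    have h1 : s' ++ t ≠ [] := by
      cases t with | nil => exact absurd rfl ht | cons c u => simp
    rw [show ((b :: s') ++ t) = b :: (s' ++ t) from rfl, dstar_cons a b h1]
    refine sup_le (le_dstar a t) ((inf_le_right.trans ih))

lemma dstar_infix_le {u : List L} (v w : List L) (hu : u ≠ []) :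
    dstar a (v ++ u ++ w) ≤ dstar a u := by
  have huw : u ++ w ≠ [] := by cases u with | nil => exact absurd rfl hu | cons => simp
  calc dstar a (v ++ u ++ w) = dstar a (v ++ (u ++ w)) := by rw [List.append_assoc]
    _ ≤ dstar a (u ++ w) := dstar_append_le_right a v huw
    _ ≤ dstar a u := dstar_append_le_left a w hu

lemma sup_le_dstar {m : L} {B : Set L} (hm : m ∈ lowerBounds B) {s : List L}
    (hs : s ≠ []) (hsB : ∀ b ∈ s, b ∈ B) : a ⊔ m ≤ dstar a s := by
  induction s with
  | nil => exact absurd rfl hs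
  | cons b t ih =>
    have hb : m ≤ b := hm (hsB b (by simp))
    cases t with
    | nil => exact sup_le le_sup_left (hb.trans le_sup_right)
    | cons c u =>
      rw [dstar_cons a b (by simp)]
      have ht := ih (by simp) (fun x hx => hsB x (List.mem_cons_of_mem b hx))
      exact sup_le le_sup_left (le_sup_right.trans'
        (le_inf hb (le_sup_right.trans ht)))

end DstarLemmas

lemma joinDep_of_mem_minCover {L : Type*} [Lattice L] {p : L} {E : Finset L}
    (hE : IsMinimalNontrivialJoinCover p E) {q : L} (hq : q ∈ E) : JoinDep p q := by
  classical
  obtain ⟨⟨hne, hle, hnt⟩, hmin⟩ := hE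
  have hpq : ¬ p ≤ q := hnt q hq
  have herase : (E.erase q).Nonempty := by
    rw [Finset.nonempty_iff_ne_empty]
    intro h
    rcases (Finset.erase_eq_empty_iff E q).1 h with h' | h'
    · exact hne.ne_empty h'
    · subst h'
      simp only [Finset.sup'_singleton, id] at hle
      exact hpq hle
  set c := (E.erase q).sup' herase id with hc
  have hsup1 : p ≤ q ⊔ c := hle.trans (Finset.sup'_le _ _ fun x hx => by
    rcases eq_or_ne x q with rfl | hxq
    · exact le_sup_left
    · exact (Finset.le_sup' id (Finset.mem_erase.2 ⟨hxq, hx⟩)).trans le_sup_right)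
  refine ⟨fun h => hpq (h ▸ le_rfl), c, hsup1, ?_⟩
  intro x hx hpxc
  set X : Finset L := insert x (E.erase q) with hX
  have hXne : X.Nonempty := Finset.insert_nonempty _ _
  have hXle : x ⊔ c ≤ X.sup' hXne id :=
    sup_le (Finset.le_sup' id (Finset.mem_insert_self _ _))
      (Finset.sup'_le _ _ fun z hz => Finset.le_sup' id (Finset.mem_insert_of_mem hz))
  have hXcov : IsNontrivialJoinCover p X := by
    refine ⟨hXne, hpxc.trans hXle, ?_⟩
    intro z hz
    rcases Finset.mem_insert.1 hz with rfl | hz'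
    · exact fun hpz => hpq (hpz.trans hx.le)
    · exact hnt z (Finset.mem_of_mem_erase hz')
  have hXref : Refines (X : Set L) (E : Set L) := by
    intro z hz
    rcases Finset.mem_insert.1 (by exact_mod_cast hz) with rfl | hz'
    · exact ⟨q, by exact_mod_cast hq, hx.le⟩
    · exact ⟨z, by exact_mod_cast Finset.mem_of_mem_erase hz', le_rfl⟩
  have := hmin X hXcov hXref
  have hqX : q ∈ X := this hq
  rcases Finset.mem_insert.1 hqX with rfl | h'
  · exact absurd rfl hx.ne'
  · exact Finset.notMem_erase q E h'

lemma key_lemma {L : Type*} [Lattice L] {Sg : Set L} (hlv : IsLeaven Sg)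
    (a m : L) (B : Set L) (hm : IsGLB B m) :
    ∀ p : L, p ∈ Sg → (∀ s : List L, s ≠ [] → (∀ b ∈ s, b ∈ B) → p ≤ dstar a s) →
      p ≤ a ⊔ m := by
  classical
  obtain ⟨-, -, ⟨hmcrp1, hmcrp2⟩, hnoseq⟩ := hlv
  set r : {x : L // x ∈ Sg} → {x : L // x ∈ Sg} → Prop :=
    fun q p => JoinDep p.1 q.1 with hr
  have hwf : WellFounded r := by
    by_contra hwf'
    have hex : ∃ x, ¬ Acc r x := by
      by_contra h
      push_neg at h
      exact hwf' ⟨fun x => h x⟩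
    obtain ⟨x0, hx0⟩ := hex
    have key : ∀ y : {x : L // x ∈ Sg}, ¬ Acc r y → ∃ z, r z y ∧ ¬ Acc r z := by
      intro y hy
      by_contra h
      push_neg at h
      exact hy (Acc.intro y fun z hz => h z hz)
    have step : ∀ y : {x : {x : L // x ∈ Sg} // ¬ Acc r x},
        ∃ z : {x : {x : L // x ∈ Sg} // ¬ Acc r x}, r z.1 y.1 := by
      intro y
      obtain ⟨z, hz, hnz⟩ := key y.1 y.2
      exact ⟨⟨z, hnz⟩, hz⟩
    choose g hg using step
    set f : ℕ → {x : {x : L // x ∈ Sg} // ¬ Acc r x} := fun n => g^[n] ⟨x0, hx0⟩ with hf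
    apply hnoseq
    refine ⟨fun n => (f n).1.1, fun n => (f n).1.2, fun n => ?_⟩
    show JoinDep (f n).1.1 (f (n + 1)).1.1
    have hstep : f (n + 1) = g (f n) := Function.iterate_succ_apply' g n _
    rw [hstep]
    exact hg (f n)
  suffices h : ∀ p' : {x : L // x ∈ Sg},
      (∀ s : List L, s ≠ [] → (∀ b ∈ s, b ∈ B) → p'.1 ≤ dstar a s) → p'.1 ≤ a ⊔ m by
    intro p hp hps; exact h ⟨p, hp⟩ hps
  intro p'
  refine hwf.induction (C := fun p' =>
    (∀ s : List L, s ≠ [] → (∀ b ∈ s, b ∈ B) → p'.1 ≤ dstar a s) → p'.1 ≤ a ⊔ m) p' ?_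
  rintro ⟨p, hpSg⟩ IH hp
  simp only at IH hp ⊢
  by_cases hpa : p ≤ a
  · exact hpa.trans le_sup_left
  by_cases hpB : ∀ b ∈ B, p ≤ b
  · exact (hm.2 hpB).trans le_sup_right
  push_neg at hpB
  obtain ⟨b₀, hb₀B, hpb₀⟩ := hpB
  -- for each admissible s, a minimal cover refining {a, b₀ ⊓ dstar a s}
  have hcover : ∀ s : List L, s ≠ [] → (∀ b ∈ s, b ∈ B) →
      ∃ E ∈ MinCoversIn Sg p, Refines (E : Set L) (({a, b₀ ⊓ dstar a s} : Finset L) : Set L) := by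
    intro s hs hsB
    apply hmcrp1 p hpSg
    have hpd : p ≤ a ⊔ (b₀ ⊓ dstar a s) := by
      have := hp (b₀ :: s) (by simp) (by
        intro b hb
        rcases List.mem_cons.1 hb with rfl | hb'
        · exact hb₀B
        · exact hsB b hb')
      rwa [dstar_cons a b₀ hs] at this
    have hXne : ({a, b₀ ⊓ dstar a s} : Finset L).Nonempty := ⟨a, by simp⟩
    refine ⟨hXne, ?_, ?_⟩
    · refine hpd.trans (sup_le ?_ ?_)
      · exact Finset.le_sup' id (by simp)
      · exact Finset.le_sup' id (by simp)
    · intro x hx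
      rcases Finset.mem_insert.1 hx with rfl | hx'
      · exact hpa
      · rw [Finset.mem_singleton.1 hx']
        exact fun h => hpb₀ (h.trans inf_le_left)
  choose! Esel hEmem hEref using hcover
  have hMfin : (MinCoversIn Sg p).Finite := hmcrp2 p hpSg
  have hpick : ∃ E ∈ MinCoversIn Sg p, ∀ t : List L, t ≠ [] → (∀ b ∈ t, b ∈ B) →
      ∃ s : List L, (s ≠ [] ∧ ∀ b ∈ s, b ∈ B) ∧ dstar a s ≤ dstar a t ∧ Esel s = E := by
    by_contra hcon
    push_neg at hcon
    choose! tsel ht1 ht2 ht3 using hcon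
    set T := hMfin.toFinset with hT
    set tstar : List L := (T.toList.map tsel).flatten ++ [b₀] with htstar
    have h1 : tstar ≠ [] := by simp [htstar]
    have h2 : ∀ b ∈ tstar, b ∈ B := by
      intro b hb
      rcases List.mem_append.1 hb with hb' | hb'
      · obtain ⟨l, hl, hbl⟩ := List.mem_flatten.1 hb'
        obtain ⟨E, hET, rfl⟩ := List.mem_map.1 hl
        have hEM : E ∈ MinCoversIn Sg p := hMfin.mem_toFinset.1 (Finset.mem_toList.1 hET)
        exact ht2 E hEM b hbl
      · rw [List.mem_singleton.1 hb']; exact hb₀B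
    set Estar := Esel tstar with hEstar
    have hEstarM : Estar ∈ MinCoversIn Sg p := hEmem tstar h1 h2
    have hmemmap : tsel Estar ∈ T.toList.map tsel :=
      List.mem_map_of_mem (f := tsel) (Finset.mem_toList.2 (hMfin.mem_toFinset.2 hEstarM))
    obtain ⟨v, w, hvw⟩ := List.infix_of_mem_flatten hmemmap
    have hledstar : dstar a tstar ≤ dstar a (tsel Estar) := by
      have : tstar = v ++ tsel Estar ++ (w ++ [b₀]) := by
        simp [htstar, ← hvw, List.append_assoc]
      rw [this]
      exact dstar_infix_le a v (w ++ [b₀]) (ht1 Estar hEstarM)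
    exact ht3 Estar hEstarM tstar ⟨h1, h2⟩ hledstar rfl
  obtain ⟨E, hEM, hEG⟩ := hpick
  have hEM' := hEM
  obtain ⟨hEmincov, hESg⟩ := hEM
  obtain ⟨⟨hEne, hEle, hEnt⟩, hEmin⟩ := hEmincov
  have hqle : ∀ q ∈ E, q ≤ a ⊔ m := by
    intro q hqE
    by_cases hqa : q ≤ a
    · exact hqa.trans le_sup_left
    have hq' : ∀ t : List L, t ≠ [] → (∀ b ∈ t, b ∈ B) → q ≤ dstar a t := by
      intro t ht htB
      obtain ⟨s, ⟨hs1, hs2⟩, hsle, hsE⟩ := hEG t ht htB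
      have href : Refines (E : Set L) (({a, b₀ ⊓ dstar a s} : Finset L) : Set L) := by
        rw [← hsE]; exact hEref s hs1 hs2
      obtain ⟨y, hy, hqy⟩ := href q (by exact_mod_cast hqE)
      rcases Finset.mem_insert.1 (by exact_mod_cast hy) with rfl | hy'
      · exact absurd hqy hqa
      · rw [Finset.mem_singleton.1 hy'] at hqy
        exact (hqy.trans inf_le_right).trans hsle
    have hDq : JoinDep p q := joinDep_of_mem_minCover hEM'.1 hqE
    exact IH ⟨q, hESg hqE⟩ hDq hq'
  exact hEle.trans (Finset.sup'_le _ _ hqle)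

/-- Every fermentable lattice is dually `*`-distributive. -/
theorem duallyStarDistributive_of_fermentable {L : Type*} [Lattice L]
    (hferm : Fermentable L) : DuallyStarDistributive L := by
  obtain ⟨Sg, hlv⟩ := hferm
  intro a B m hB hm
  constructor
  · rintro x ⟨s, hs, hsB, rfl⟩
    exact sup_le_dstar a hm.1 hs hsB
  · intro c hc
    obtain ⟨S, hSSg, hSc⟩ := hlv.2.1 c
    refine hSc.2 ?_
    intro p hpS
    refine key_lemma hlv a m B hm p (hSSg hpS) ?_
    intro s hs hsB
    exact (hSc.1 hpS).trans (hc ⟨s, hs, hsB, rfl⟩)
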